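/- Every G-invariant polynomial f ∈ F[x,y,z,w] of total degree at most p satisfies f(v_1) = f(v_2). Consequently, the G-invariant polynomials of degree at most p do not form a separating set for V = W_1 ⊕ W_0. -/

import Mathlib

/-!
Invariance under `ρ` makes the `y`-exponent of every monomial of `f` that is free of `x`
divisible by `p`; with `deg f ≤ p` such a monomial is either free of `y` or equal to `y^p`.
Hence `f(0,1,a,b) = f(0,0,a,b) + [y^p] f`, while `σ` gives `f(0,0,1,0) = f(0,0,0,1)`.
The invariant `z x^p + w y^p` of degree `p + 1` takes the values `0` at `v₁` and `1` at `v₂`.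
-/

open MvPolynomial

theorem DihedralGroup.closure_r_one_sr_zero (n : ℕ) :
    Subgroup.closure {r 1, sr 0} = (⊤ : Subgroup (DihedralGroup n)) := by
  refine eq_top_iff.mpr fun g _ => ?_
  have hr : ∀ i : ZMod n, r i ∈ Subgroup.closure {r (1 : ZMod n), sr 0} := fun i => by
    rw [← ZMod.intCast_zmod_cast i, ← r_one_zpow]
    exact zpow_mem (Subgroup.subset_closure (by simp)) _
  cases g with
  | r i => exact hr i
  | sr i =>
    rw [← zero_add i, ← sr_mul_r]
    exact mul_mem (Subgroup.subset_closure (by simp)) (hr i)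

theorem DihedralGroup.smul_eq_self_of_r_one_of_sr_zero {n : ℕ} {G Y : Type*} [Group G]
    [MulAction G Y] (α : DihedralGroup n →* G) {y : Y}
    (hr : α (r 1) • y = y) (hs : α (sr 0) • y = y) (g : DihedralGroup n) : α g • y = y := by
  have hle : Subgroup.closure {r 1, sr 0} ≤ (MulAction.stabilizer G y).comap α :=
    (Subgroup.closure_le _).mpr <| by simp [Set.insert_subset_iff, hr, hs]
  exact hle (closure_r_one_sr_zero n ▸ Subgroup.mem_top g)

namespace MvPolynomial

section Diagonal

variable {σ R : Type*} [Fintype σ] [CommSemiring R]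

theorem aeval_C_mul_X_monomial (u : σ → R) (m : σ →₀ ℕ) (a : R) :
    aeval (fun i => C (u i) * X i) (monomial m a) = monomial m ((∏ i, u i ^ m i) * a) := by
  rw [aeval_monomial, monomial_eq, Finsupp.prod_fintype _ _ (fun _ => pow_zero _),
    Finsupp.prod_fintype _ _ (fun _ => pow_zero _)]
  simp only [mul_pow, Finset.prod_mul_distrib, ← C_pow, ← map_prod, algebraMap_eq, C_mul]
  ring

theorem coeff_aeval_C_mul_X (u : σ → R) (f : MvPolynomial σ R) (m : σ →₀ ℕ) :
    coeff m (aeval (fun i => C (u i) * X i) f) = (∏ i, u i ^ m i) * coeff m f := by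
  classical
  induction f using MvPolynomial.induction_on' with
  | monomial n a =>
    rw [aeval_C_mul_X_monomial, coeff_monomial, coeff_monomial]
    split_ifs with h
    · rw [h]
    · rw [mul_zero]
  | add f g hf hg => rw [map_add, coeff_add, coeff_add, hf, hg, mul_add]

theorem prod_pow_eq_one_of_aeval_C_mul_X_eq_self [IsDomain R] {u : σ → R}
    {f : MvPolynomial σ R} (hf : aeval (fun i => C (u i) * X i) f = f) {m : σ →₀ ℕ}
    (hm : m ∈ f.support) : ∏ i, u i ^ m i = 1 :=
  mul_right_cancel₀ (mem_support_iff.mp hm) <| by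
    rw [one_mul, ← coeff_aeval_C_mul_X, hf]

end Diagonal

theorem eval_eq_eval_add_coeff_mul {σ R : Type*} [Fintype σ] [CommRing R] {v v' : σ → R}
    {f : MvPolynomial σ R} (n : σ →₀ ℕ)
    (h : ∀ m ∈ f.support, m ≠ n → ∏ i, v i ^ m i = ∏ i, v' i ^ m i) :
    eval v f = eval v' f + coeff n f * (∏ i, v i ^ n i - ∏ i, v' i ^ n i) := by
  rw [eval_eq', eval_eq', ← sub_eq_iff_eq_add', ← Finset.sum_sub_distrib]
  simp_rw [← mul_sub]
  exact Finset.sum_eq_single n (fun m hm hne => by rw [h m hm hne, sub_self, mul_zero])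
    (fun hn => by rw [notMem_support_iff.mp hn, zero_mul])

end MvPolynomial

section DihedralInvariants

variable {F : Type*} [Field F] {p : ℕ} {lam : F} {f : MvPolynomial (Fin 4) F}

theorem apply_one_eq_zero_of_mem_support (hlam : IsPrimitiveRoot lam p)
    (hρ : aeval (fun i => C (![lam, lam⁻¹, 1, 1] i) * X i) f = f) (hdeg : f.totalDegree ≤ p)
    {m : Fin 4 →₀ ℕ} (hm : m ∈ f.support) (h0 : m 0 = 0) (hne : m ≠ Finsupp.single 1 p) :
    m 1 = 0 := by
  have hpow : lam ^ m 1 = 1 := by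
    simpa [Fin.prod_univ_four, h0] using prod_pow_eq_one_of_aeval_C_mul_X_eq_self hρ hm
  have hsum : m 0 + m 1 + m 2 + m 3 ≤ p := by
    have := (le_totalDegree hm).trans hdeg
    rwa [Finsupp.sum_fintype _ _ fun _ => rfl, Fin.sum_univ_four] at this
  by_contra h1
  have hp1 : m 1 = p :=
    Nat.eq_of_dvd_of_lt_two_mul h1 ((hlam.pow_eq_one_iff_dvd _).mp hpow) (by omega)
  refine hne (Finsupp.ext fun i => ?_)
  fin_cases i <;> simp <;> omega

theorem eval_zero_one_eq_eval_zero_zero_add_coeff (hp : p ≠ 0) (hlam : IsPrimitiveRoot lam p)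
    (hρ : aeval (fun i => C (![lam, lam⁻¹, 1, 1] i) * X i) f = f) (hdeg : f.totalDegree ≤ p)
    (a b : F) :
    eval ![0, 1, a, b] f = eval ![0, 0, a, b] f + coeff (Finsupp.single 1 p) f := by
  have key := eval_eq_eval_add_coeff_mul (v := ![0, 1, a, b]) (v' := ![0, 0, a, b]) (f := f)
    (Finsupp.single 1 p) fun m hm hne => by
      simp only [Fin.prod_univ_four]
      by_cases h0 : m 0 = 0
      · simp [apply_one_eq_zero_of_mem_support hlam hρ hdeg hm h0 hne]
      · simp [zero_pow h0]
  simpa [Fin.prod_univ_four, hp] using key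

theorem eval_eq_of_fixed (hp : p ≠ 0) (hlam : IsPrimitiveRoot lam p)
    (hρ : aeval (fun i => C (![lam, lam⁻¹, 1, 1] i) * X i) f = f)
    (hσ : rename ![1, 0, 3, 2] f = f) (hdeg : f.totalDegree ≤ p) :
    eval ![0, 1, 1, 0] f = eval ![0, 1, 0, 1] f := by
  have hswap : eval ![0, 0, 1, 0] f = eval ![0, 0, 0, 1] f := by
    conv_rhs => rw [← hσ, eval_rename]
    congr 2
    funext i
    fin_cases i <;> rfl
  rw [eval_zero_one_eq_eval_zero_zero_add_coeff hp hlam hρ hdeg,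
    eval_zero_one_eq_eval_zero_zero_add_coeff hp hlam hρ hdeg, hswap]

end DihedralInvariants

theorem low_degree_invariants_not_separating_general
    (p : ℕ) (hp_odd : Odd p)
    (F : Type*) [Field F]
    (lam : F) (hlam : IsPrimitiveRoot lam p)
    (α : DihedralGroup p →*
      (MvPolynomial (Fin 4) F ≃ₐ[F] MvPolynomial (Fin 4) F))
    (hρx : α (DihedralGroup.r 1) (X 0) = C lam * X 0)
    (hρy : α (DihedralGroup.r 1) (X 1) = C lam⁻¹ * X 1)
    (hρz : α (DihedralGroup.r 1) (X 2) = X 2)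
    (hρw : α (DihedralGroup.r 1) (X 3) = X 3)
    (hσx : α (DihedralGroup.sr 0) (X 0) = X 1)
    (hσy : α (DihedralGroup.sr 0) (X 1) = X 0)
    (hσz : α (DihedralGroup.sr 0) (X 2) = X 3)
    (hσw : α (DihedralGroup.sr 0) (X 3) = X 2) :
    (∀ f : MvPolynomial (Fin 4) F,
      (∀ g : DihedralGroup p, α g f = f) → f.totalDegree ≤ p →
      eval ![(0 : F), 1, 1, 0] f = eval ![(0 : F), 1, 0, 1] f) ∧
    ¬ (∀ u v : Fin 4 → F,
        (∀ f : MvPolynomial (Fin 4) F,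
          (∀ g : DihedralGroup p, α g f = f) → f.totalDegree ≤ p →
          eval u f = eval v f) →
        (∀ f : MvPolynomial (Fin 4) F,
          (∀ g : DihedralGroup p, α g f = f) → eval u f = eval v f)) := by
  have hp : p ≠ 0 := hp_odd.pos.ne'
  have hρ : ∀ f, α (DihedralGroup.r 1) f = aeval (fun i => C (![lam, lam⁻¹, 1, 1] i) * X i) f :=
    DFunLike.congr_fun <| algHom_ext (f := (α (DihedralGroup.r 1)).toAlgHom) fun i => by
      fin_cases i <;> simp [hρx, hρy, hρz, hρw]
  have hσ : ∀ f, α (DihedralGroup.sr 0) f = rename ![1, 0, 3, 2] f :=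
    DFunLike.congr_fun <| algHom_ext (f := (α (DihedralGroup.sr 0)).toAlgHom) fun i => by
      fin_cases i <;> simp [hσx, hσy, hσz, hσw]
  have low_degree : ∀ f : MvPolynomial (Fin 4) F, (∀ g, α g f = f) → f.totalDegree ≤ p →
      eval ![(0 : F), 1, 1, 0] f = eval ![(0 : F), 1, 0, 1] f := fun f hf hdeg =>
    eval_eq_of_fixed hp hlam ((hρ f).symm.trans (hf _)) ((hσ f).symm.trans (hf _)) hdeg
  refine ⟨low_degree, fun separating => ?_⟩
  have hinv : ∀ g, α g (X 2 * X 0 ^ p + X 3 * X 1 ^ p) = X 2 * X 0 ^ p + X 3 * X 1 ^ p :=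
    DihedralGroup.smul_eq_self_of_r_one_of_sr_zero α
      (by simp [AlgEquiv.smul_def, hρ, mul_pow, ← C_pow, hlam.pow_eq_one])
      (by simp [AlgEquiv.smul_def, hσ, add_comm])
  simpa [hp] using separating _ _ low_degree _ hinv

/-- For `V = W_1 ⊕ W_0 = F⁴` with `G = D_{2p}` acting on
`F[V] = F[x,y,z,w]` (`x = X 0`, `y = X 1`, `z = X 2`, `w = X 3`) via
`ρ(x) = λx`, `ρ(y) = λ⁻¹y`, `ρ(z) = z`, `ρ(w) = w`, `σ` swapping `x ↔ y` and
`z ↔ w`: every `G`-invariant polynomial `f` of total degree at most `p`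
satisfies `f(v₁) = f(v₂)` for `v₁ = (0,1,1,0)` and `v₂ = (0,1,0,1)`;
consequently, the `G`-invariant polynomials of degree at most `p` do not form
a separating set for `V`. -/
theorem low_degree_invariants_not_separating
    (p : ℕ) (hp_odd : Odd p) (hp : 3 ≤ p)
    (F : Type*) [Field F] [IsAlgClosed F] [CharP F 2]
    (lam : F) (hlam : IsPrimitiveRoot lam p)
    (α : DihedralGroup p →*
      (MvPolynomial (Fin 4) F ≃ₐ[F] MvPolynomial (Fin 4) F))
    (hρx : α (DihedralGroup.r 1) (X 0) = C lam * X 0)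
    (hρy : α (DihedralGroup.r 1) (X 1) = C lam⁻¹ * X 1)
    (hρz : α (DihedralGroup.r 1) (X 2) = X 2)
    (hρw : α (DihedralGroup.r 1) (X 3) = X 3)
    (hσx : α (DihedralGroup.sr 0) (X 0) = X 1)
    (hσy : α (DihedralGroup.sr 0) (X 1) = X 0)
    (hσz : α (DihedralGroup.sr 0) (X 2) = X 3)
    (hσw : α (DihedralGroup.sr 0) (X 3) = X 2) :
    (∀ f : MvPolynomial (Fin 4) F,
      (∀ g : DihedralGroup p, α g f = f) → f.totalDegree ≤ p →
      eval ![(0 : F), 1, 1, 0] f = eval ![(0 : F), 1, 0, 1] f) ∧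
    ¬ (∀ u v : Fin 4 → F,
        (∀ f : MvPolynomial (Fin 4) F,
          (∀ g : DihedralGroup p, α g f = f) → f.totalDegree ≤ p →
          eval u f = eval v f) →
        (∀ f : MvPolynomial (Fin 4) F,
          (∀ g : DihedralGroup p, α g f = f) → eval u f = eval v f)) :=
  low_degree_invariants_not_separating_general p hp_odd F lam hlam α hρx hρy hρz hρw hσx hσy hσz hσw
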